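/- Let $R$ be a commutative ring, $V$ a free $R$-module of finite rank $v$, and $\phi : V \to R$ a surjective $R$-linear map. Then the Koszul complex $\bigwedge^v V \to \bigwedge^{v-1} V \to \cdots \to \bigwedge^1 V \to R \to 0$ with differentials given by contraction against $\phi$ is exact. -/

import Mathlib

/-- The wedge of a family of vectors, as an element of the `n`-th exterior power. -/
noncomputable def exteriorWedge (k : Type*) [CommRing k] {M : Type*} [AddCommGroup M]
    [Module k M] (n : ℕ) (v : Fin n → M) : ⋀[k]^n M :=
  ⟨ExteriorAlgebra.ιMulti k n v, ExteriorAlgebra.ιMulti_range k n (Set.mem_range_self v)⟩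

/-!
The differentials are the restrictions of the contraction `ι_φ` on the exterior algebra
`⋀ V = CliffordAlgebra 0`, which satisfies `ι_φ ∘ ι_φ = 0` and
`ι_φ (e ∧ x) = φ e • x - e ∧ ι_φ x`. Choosing `e` with `φ e = 1`, left multiplication by `e`
is a contracting homotopy: a cycle `x` is the boundary of `e ∧ x`. In the top degree
`e ∧ x ∈ ⋀^(v+1) V = 0`, so there every cycle vanishes.
-/

section

open CliffordAlgebra ExteriorAlgebra

variable {R M : Type*} [CommRing R] [AddCommGroup M] [Module R M]

theorem ExteriorAlgebra.contractLeft_ιMulti (φ : Module.Dual R M) (p : ℕ)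
    (w : Fin (p + 1) → M) :
    contractLeft (Q := 0) φ (ιMulti R (p + 1) w) =
      ∑ i : Fin (p + 1), ((-1 : R) ^ (i : ℕ) * φ (w i)) • ιMulti R p (w ∘ i.succAbove) := by
  induction p with
  | zero => simp [Algebra.algebraMap_eq_smul_one]
  | succ p ih =>
    have h_succ (j : Fin (p + 1)) : ιMulti R (p + 1) (w ∘ j.succ.succAbove) =
        ι R (w 0) * ιMulti R p (Matrix.vecTail w ∘ j.succAbove) := by
      rw [ιMulti_succ_apply]
      congr 2
      ext k
      simp [Matrix.vecTail, Fin.succ_succAbove_succ]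
    rw [ιMulti_succ_apply, contractLeft_ι_mul, ih, Fin.sum_univ_succ (n := p + 1)]
    simp only [h_succ, Fin.succAbove_zero, Fin.val_succ, pow_succ]
    rw [Finset.mul_sum, sub_eq_add_neg, ← Finset.sum_neg_distrib]
    congr 1
    · simp [Matrix.vecTail]
    · refine Finset.sum_congr rfl fun j _ => ?_
      rw [mul_smul_comm, ← neg_smul]
      simp [Matrix.vecTail]

theorem ExteriorAlgebra.ι_mul_mem_exteriorPower {p : ℕ} (e : M) {x : ExteriorAlgebra R M}
    (hx : x ∈ ⋀[R]^p M) : ι R e * x ∈ ⋀[R]^(p + 1) M := by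
  rw [exteriorPower, pow_succ']
  exact Submodule.mul_mem_mul (LinearMap.mem_range_self _ e) hx

theorem ExteriorAlgebra.contractLeft_eq_zero_of_mem_exteriorPower_zero (φ : Module.Dual R M)
    {x : ExteriorAlgebra R M} (hx : x ∈ ⋀[R]^0 M) : contractLeft (Q := 0) φ x = 0 := by
  rw [exteriorPower, pow_zero] at hx
  obtain ⟨r, rfl⟩ := Submodule.mem_one.mp hx
  exact contractLeft_algebraMap _ φ r

theorem exteriorPower.subsingleton_of_card_lt {ι : Type*} [LinearOrder ι] [Fintype ι]
    (b : Module.Basis ι R M) {n : ℕ} (h : Fintype.card ι < n) : Subsingleton (⋀[R]^n M) := by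
  have : IsEmpty (Set.powersetCard ι n) := by
    rw [Set.isEmpty_coe_sort, Set.powersetCard.eq_empty_iff, Nat.card_eq_fintype_card]
    exact h
  exact (b.exteriorPower n).repr.toEquiv.subsingleton

theorem exteriorPower.coe_apply_eq_contractLeft {φ : Module.Dual R M} {p : ℕ}
    {f : ⋀[R]^(p + 1) M →ₗ[R] ⋀[R]^p M}
    (hf : ∀ w : Fin (p + 1) → M, f (exteriorWedge R (p + 1) w) =
      ∑ i : Fin (p + 1), ((-1 : R) ^ (i : ℕ) * φ (w i)) • exteriorWedge R p (w ∘ i.succAbove))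
    (x : ⋀[R]^(p + 1) M) : (f x : ExteriorAlgebra R M) = contractLeft (Q := 0) φ x := by
  suffices (⋀[R]^p M).subtype ∘ₗ f = contractLeft (Q := 0) φ ∘ₗ (⋀[R]^(p + 1) M).subtype from
    LinearMap.congr_fun this x
  ext w
  change (f (exteriorWedge R (p + 1) w) : ExteriorAlgebra R M) =
    contractLeft (Q := 0) φ (ExteriorAlgebra.ιMulti R (p + 1) w)
  rw [hf, contractLeft_ιMulti]
  push_cast
  rfl

namespace Koszul

variable {φ : Module.Dual R M} {d : ∀ p : ℕ, ⋀[R]^(p + 1) M →ₗ[R] ⋀[R]^p M}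

theorem range_le_ker (hd : ∀ p x, (d p x : ExteriorAlgebra R M) = contractLeft (Q := 0) φ x)
    (n : ℕ) : LinearMap.range (d (n + 1)) ≤ LinearMap.ker (d n) := by
  rintro _ ⟨x, rfl⟩
  rw [LinearMap.mem_ker, ← Submodule.coe_eq_zero, hd, hd, contractLeft_contractLeft]

theorem mem_range_of_contractLeft_eq_zero
    (hd : ∀ p x, (d p x : ExteriorAlgebra R M) = contractLeft (Q := 0) φ x)
    {e : M} (he : φ e = 1) {n : ℕ} (y : ⋀[R]^n M) (hy : contractLeft (Q := 0) φ y = 0) :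
    y ∈ LinearMap.range (d n) :=
  ⟨⟨ι R e * y, ι_mul_mem_exteriorPower e y.2⟩, Subtype.ext <| by
    rw [hd, contractLeft_ι_mul, he, one_smul, hy, mul_zero, sub_zero]⟩

theorem ker_le_range (hd : ∀ p x, (d p x : ExteriorAlgebra R M) = contractLeft (Q := 0) φ x)
    {e : M} (he : φ e = 1) (n : ℕ) : LinearMap.ker (d n) ≤ LinearMap.range (d (n + 1)) :=
  fun y hy => mem_range_of_contractLeft_eq_zero hd he y <| by
    rw [← hd, LinearMap.mem_ker.mp hy, Submodule.coe_zero]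

theorem surjective_zero (hd : ∀ p x, (d p x : ExteriorAlgebra R M) = contractLeft (Q := 0) φ x)
    {e : M} (he : φ e = 1) : Function.Surjective (d 0) :=
  fun y => mem_range_of_contractLeft_eq_zero hd he y
    (contractLeft_eq_zero_of_mem_exteriorPower_zero φ y.2)

theorem injective_of_subsingleton
    (hd : ∀ p x, (d p x : ExteriorAlgebra R M) = contractLeft (Q := 0) φ x)
    {e : M} (he : φ e = 1) (n : ℕ) [Subsingleton (⋀[R]^(n + 2) M)] :
    Function.Injective (d n) := by
  rw [← LinearMap.ker_eq_bot, eq_bot_iff]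
  refine (ker_le_range hd he n).trans ?_
  rw [Subsingleton.elim (d (n + 1)) 0, LinearMap.range_zero]

end Koszul

end

/-- for a commutative ring `R`, `V = R^v` free of rank `v`, and a
surjective `R`-linear map `φ : V → R`, the Koszul complex
`⋀^v V → ⋀^(v-1) V → ⋯ → ⋀^1 V → R → 0` with differentials given by contraction
against `φ` is exact.  Here `⋀^0 V ≅ R`, so exactness at `R` is surjectivity of `d 0`,
exactness at `⋀^v V` is injectivity of the top differential, and at the interior terms
the image of the incoming differential is the kernel of the outgoing one. -/
theorem koszul_complex_exact_of_surjective (R : Type*) [CommRing R] (v : ℕ)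
    (φ : (Fin v → R) →ₗ[R] R) (hφ : Function.Surjective φ)
    (d : ∀ p : ℕ, (⋀[R]^(p + 1) (Fin v → R)) →ₗ[R] (⋀[R]^p (Fin v → R)))
    (hd : ∀ (p : ℕ) (w : Fin (p + 1) → (Fin v → R)),
      d p (exteriorWedge R (p + 1) w) =
        ∑ i : Fin (p + 1), ((-1 : R) ^ (i : ℕ) * φ (w i)) •
          exteriorWedge R p (w ∘ i.succAbove)) :
    (∀ n : ℕ, n + 2 ≤ v → LinearMap.range (d (n + 1)) = LinearMap.ker (d n)) ∧
    (∀ n : ℕ, n + 1 = v → Function.Injective (d n)) ∧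
    Function.Surjective (d 0) := by
  obtain ⟨e, he⟩ := hφ 1
  have hC (p : ℕ) (x : ⋀[R]^(p + 1) (Fin v → R)) :
      (d p x : ExteriorAlgebra R (Fin v → R)) = CliffordAlgebra.contractLeft (Q := 0) φ x :=
    exteriorPower.coe_apply_eq_contractLeft (hd p) x
  refine ⟨fun n _ => le_antisymm (Koszul.range_le_ker hC n) (Koszul.ker_le_range hC he n),
    fun n hn => ?_, Koszul.surjective_zero hC he⟩
  subst hn
  have := exteriorPower.subsingleton_of_card_lt (Pi.basisFun R (Fin (n + 1))) (n := n + 2)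
    (by simp)
  exact Koszul.injective_of_subsingleton hC he n
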